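/- For all u > arccosh(3/2), with φ(u) = arccosh(cosh u − 1/2): (1 + e^{−7u/2 + 2φ(u)})(1 − e^{−u+φ(u)}) e^{u} < (1 + e^{3u/2 − 2φ(u)})(1 − e^{−u−φ(u)}); equivalently, log((1 + e^{−7u/2+2φ(u)})/(1 + e^{3u/2−2φ(u)})) + log((1 − e^{−u+φ(u)})/(1 − e^{−u−φ(u)})) + u < 0. -/

import Mathlib

/-!
Put `s = exp (u / 2)` and `p = exp φ(u)`. Since `cosh φ = cosh u - 1/2`, these satisfy
`s²p² + s² = p (s⁴ - s² + 1)`, and `u > κ` gives `1 < p` and `3/2 < s`. After clearing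
denominators the inequality says that a polynomial `F(s, p)` is positive. Reducing `s¹⁰ F` modulo
the quadratic relation leaves `A(s) + B(s) p`, which is positive because `B(s) > 0` for `s > 1`,
`A(s) + B(s) > 0` for `s > 3/2`, and `p > 1`. The logarithmic form is the logarithm of the first.
-/

noncomputable def arcosh (x : ℝ) : ℝ := Real.log (x + Real.sqrt (x ^ 2 - 1))

noncomputable def kappa : ℝ := arcosh (3 / 2)

noncomputable def phi (u : ℝ) : ℝ := arcosh (Real.cosh u - 1 / 2)

theorem arcosh_eq_real_arcosh : arcosh = Real.arcosh := rfl

open Real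

theorem cosh_kappa : cosh kappa = 3 / 2 := by
  rw [kappa, arcosh_eq_real_arcosh, cosh_arcosh (by norm_num)]

theorem kappa_pos : 0 < kappa := by
  rw [kappa, arcosh_eq_real_arcosh]
  exact arcosh_pos (by norm_num)

theorem three_halves_lt_cosh_of_kappa_lt {u : ℝ} (hu : kappa < u) : 3 / 2 < cosh u := by
  rw [← cosh_kappa, cosh_lt_cosh, abs_of_pos kappa_pos, abs_of_pos (kappa_pos.trans hu)]
  exact hu

theorem cosh_phi {u : ℝ} (hu : 3 / 2 ≤ cosh u) : cosh (phi u) = cosh u - 1 / 2 := by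
  rw [phi, arcosh_eq_real_arcosh, cosh_arcosh (by linarith)]

theorem phi_pos {u : ℝ} (hu : 3 / 2 < cosh u) : 0 < phi u := by
  rw [phi, arcosh_eq_real_arcosh]
  exact arcosh_pos (by linarith)

theorem phi_lt_self {u : ℝ} (hu₀ : 0 < u) (hu : 3 / 2 ≤ cosh u) : phi u < u := by
  have hlt : cosh (phi u) < cosh u := by rw [cosh_phi hu]; linarith
  have hφ : 0 ≤ phi u := by
    rw [phi, arcosh_eq_real_arcosh]
    exact arcosh_nonneg (by linarith)
  rwa [cosh_lt_cosh, abs_of_nonneg hφ, abs_of_pos hu₀] at hlt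

theorem three_halves_lt_exp_half {u : ℝ} (hu₀ : 0 < u) (hu : 3 / 2 < cosh u) :
    3 / 2 < exp (u / 2) := by
  set s := exp (u / 2)
  have hs : 1 < s := one_lt_exp_iff.2 (by linarith)
  have hcosh : cosh u = (s ^ 2 + (s ^ 2)⁻¹) / 2 := by
    rw [cosh_eq, exp_neg, ← exp_nat_mul]; ring_nf
  have hquartic : 3 * s ^ 2 < s ^ 4 + 1 := by
    rw [hcosh, lt_div_iff₀ two_pos] at hu
    have := mul_lt_mul_of_pos_right hu (by positivity : (0:ℝ) < s ^ 2)
    field_simp at this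
    nlinarith
  -- `s² ≤ 9/4` would force `s² + s⁻² ≤ 9/4 + 4/9 < 3`.
  by_contra! hle
  have : s ^ 2 ≤ 9 / 4 := by nlinarith
  nlinarith [mul_nonneg (sub_nonneg.2 this) (by nlinarith : (0:ℝ) ≤ s ^ 2 - 4 / 9)]

theorem exp_relation {u φ : ℝ} (h : cosh φ = cosh u - 1 / 2) :
    exp (u / 2) ^ 2 * exp φ ^ 2 + exp (u / 2) ^ 2
      = exp φ * (exp (u / 2) ^ 4 - exp (u / 2) ^ 2 + 1) := by
  have hu : exp u = exp (u / 2) ^ 2 := by rw [← exp_nat_mul]; ring_nf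
  rw [cosh_eq, cosh_eq, exp_neg, exp_neg, hu] at h
  field_simp at h
  linear_combination h

def numeratorRemainder₀ (s : ℝ) : ℝ :=
  -s ^ 18 + s ^ 16 + 2 * s ^ 15 - 3 * s ^ 14 - s ^ 13 + 5 * s ^ 12 - 7 * s ^ 10 + 7 * s ^ 8
    - 6 * s ^ 6 + 4 * s ^ 4 - s ^ 2

def numeratorRemainder₁ (s : ℝ) : ℝ :=
  s ^ 20 - s ^ 18 - 2 * s ^ 17 + 4 * s ^ 16 + 2 * s ^ 15 - 8 * s ^ 14 - 3 * s ^ 13 + 13 * s ^ 12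
    + s ^ 11 - 16 * s ^ 10 + 17 * s ^ 8 - 14 * s ^ 6 + 10 * s ^ 4 - 5 * s ^ 2 + 1

-- In powers of `s - 1`, resp. `s - 3/2`, these polynomials have nonnegative coefficients.
theorem numeratorRemainder₁_pos {s : ℝ} (hs : 1 < s) : 0 < numeratorRemainder₁ s := by
  have ht : 0 < s - 1 := by linarith
  unfold numeratorRemainder₁
  nlinarith [pow_pos ht 2, pow_pos ht 3, pow_pos ht 4, pow_pos ht 5, pow_pos ht 6,
    pow_pos ht 7, pow_pos ht 8, pow_pos ht 9, pow_pos ht 10, pow_pos ht 11,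
    pow_pos ht 12, pow_pos ht 13, pow_pos ht 14, pow_pos ht 15, pow_pos ht 16,
    pow_pos ht 17, pow_pos ht 18, pow_pos ht 19, pow_pos ht 20]

theorem numeratorRemainder_add_pos {s : ℝ} (hs : 3 / 2 < s) :
    0 < numeratorRemainder₀ s + numeratorRemainder₁ s := by
  have ht : 0 < s - 3 / 2 := by linarith
  unfold numeratorRemainder₀ numeratorRemainder₁
  nlinarith [pow_pos ht 2, pow_pos ht 3, pow_pos ht 4, pow_pos ht 5, pow_pos ht 6,
    pow_pos ht 7, pow_pos ht 8, pow_pos ht 9, pow_pos ht 10, pow_pos ht 11,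
    pow_pos ht 12, pow_pos ht 13, pow_pos ht 14, pow_pos ht 15, pow_pos ht 16,
    pow_pos ht 17, pow_pos ht 18, pow_pos ht 19, pow_pos ht 20]

def ineqNumerator (s p : ℝ) : ℝ :=
  (p ^ 2 + s ^ 3) * s ^ 5 * (s ^ 2 * p - 1) - (s ^ 7 + p ^ 2) * (s ^ 2 - p) * p ^ 3

theorem pow_ten_mul_ineqNumerator {s p : ℝ}
    (hrel : s ^ 2 * p ^ 2 + s ^ 2 = p * (s ^ 4 - s ^ 2 + 1)) :
    s ^ 10 * ineqNumerator s p = numeratorRemainder₀ s + numeratorRemainder₁ s * p := by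
  unfold ineqNumerator numeratorRemainder₀ numeratorRemainder₁
  linear_combination ((-s^14 - 2*s^13 + 3*s^12 + s^11 - 5*s^10 + 7*s^8 - 7*s^6 + 6*s^4 - 4*s^2 + 1)
      + (s^13 - s^12 + 2*s^10 - 3*s^8 + 3*s^6 - 3*s^4 + s^2) * p
      + (s^15 - s^10 + s^8 - 2*s^6 + s^4) * p^2 + (-s^8 + s^6) * p^3 + s^8 * p^4) * hrel

theorem ineqNumerator_pos {s p : ℝ} (hs : 3 / 2 < s) (hp : 1 < p)
    (hrel : s ^ 2 * p ^ 2 + s ^ 2 = p * (s ^ 4 - s ^ 2 + 1)) : 0 < ineqNumerator s p := by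
  have hrem : 0 < numeratorRemainder₀ s + numeratorRemainder₁ s * p := by
    nlinarith [numeratorRemainder_add_pos hs, numeratorRemainder₁_pos (by linarith : 1 < s)]
  rw [← pow_ten_mul_ineqNumerator hrel] at hrem
  exact pos_of_mul_pos_right hrem (by positivity)

theorem rational_form_lt {s p : ℝ} (hs : 3 / 2 < s) (hp : 1 < p)
    (hrel : s ^ 2 * p ^ 2 + s ^ 2 = p * (s ^ 4 - s ^ 2 + 1)) :
    (1 + p ^ 2 / s ^ 7) * (1 - p / s ^ 2) * s ^ 2
      < (1 + s ^ 3 / p ^ 2) * (1 - 1 / (s ^ 2 * p)) := by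
  have hs₀ : 0 < s := by linarith
  have hp₀ : 0 < p := by linarith
  have hdiff : (1 + s ^ 3 / p ^ 2) * (1 - 1 / (s ^ 2 * p))
      - (1 + p ^ 2 / s ^ 7) * (1 - p / s ^ 2) * s ^ 2 = ineqNumerator s p / (s ^ 7 * p ^ 3) := by
    unfold ineqNumerator
    field_simp
  rw [← sub_pos, hdiff]
  exact div_pos (ineqNumerator_pos hs hp hrel) (by positivity)

theorem exp_form_lt {u φ : ℝ} (h : cosh φ = cosh u - 1 / 2) (hφ : 0 < φ)
    (hs : 3 / 2 < exp (u / 2)) :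
    (1 + exp (-7 * u / 2 + 2 * φ)) * (1 - exp (-u + φ)) * exp u
      < (1 + exp (3 * u / 2 - 2 * φ)) * (1 - exp (-u - φ)) := by
  have e₁ : exp (-7 * u / 2 + 2 * φ) = exp φ ^ 2 / exp (u / 2) ^ 7 := by
    rw [← exp_nat_mul, ← exp_nat_mul, ← exp_sub]; push_cast; ring_nf
  have e₂ : exp (-u + φ) = exp φ / exp (u / 2) ^ 2 := by
    rw [← exp_nat_mul, ← exp_sub]; push_cast; ring_nf
  have e₃ : exp u = exp (u / 2) ^ 2 := by
    rw [← exp_nat_mul]; push_cast; ring_nf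
  have e₄ : exp (3 * u / 2 - 2 * φ) = exp (u / 2) ^ 3 / exp φ ^ 2 := by
    rw [← exp_nat_mul, ← exp_nat_mul, ← exp_sub]; push_cast; ring_nf
  have e₅ : exp (-u - φ) = 1 / (exp (u / 2) ^ 2 * exp φ) := by
    rw [← exp_nat_mul, ← exp_add, one_div, ← exp_neg]; push_cast; ring_nf
  rw [e₁, e₂, e₃, e₄, e₅]
  exact rational_form_lt hs (one_lt_exp_iff.2 hφ) (exp_relation h)

theorem log_div_add_log_div_add_neg {x y z w u : ℝ} (hx : 0 < x) (hy : 0 < y) (hz : 0 < z)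
    (hw : 0 < w) (h : x * z * exp u < y * w) : log (x / y) + log (z / w) + u < 0 := by
  have hlog := log_lt_log (by positivity) h
  rw [log_mul (by positivity) (exp_pos u).ne', log_mul hx.ne' hz.ne', log_exp,
    log_mul hy.ne' hw.ne'] at hlog
  rw [log_div hx.ne' hy.ne', log_div hz.ne' hw.ne']
  linarith

theorem log_log_u (u : ℝ) (hu : kappa < u) :
    (1 + Real.exp (-7 * u / 2 + 2 * phi u)) * (1 - Real.exp (-u + phi u)) * Real.exp u
        < (1 + Real.exp (3 * u / 2 - 2 * phi u)) * (1 - Real.exp (-u - phi u)) ∧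
      Real.log ((1 + Real.exp (-7 * u / 2 + 2 * phi u)) / (1 + Real.exp (3 * u / 2 - 2 * phi u)))
        + Real.log ((1 - Real.exp (-u + phi u)) / (1 - Real.exp (-u - phi u))) + u < 0 := by
  have hcosh := three_halves_lt_cosh_of_kappa_lt hu
  have hu₀ : 0 < u := kappa_pos.trans hu
  have hφ₀ := phi_pos hcosh
  have hφu := phi_lt_self hu₀ hcosh.le
  have hlt := exp_form_lt (cosh_phi hcosh.le) hφ₀ (three_halves_lt_exp_half hu₀ hcosh)
  refine ⟨hlt, log_div_add_log_div_add_neg (by positivity) (by positivity) ?_ ?_ hlt⟩ <;>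
    exact sub_pos.2 (exp_lt_one_iff.2 (by linarith))
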